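/- For every integer n ≥ 1, the expected total oracle complexity satisfies E[ TOC(min{T, n}) ] ≤ n · Σ_{l=1}^{n} min{ 1, n·(q/p)^{l} + c·(2q)^{l} } · oc(ᾱ·γ^{l}) + n · oc(ᾱ). -/

import Mathlib

/-!
Up to a null set the step size lives on the grid `ᾱ γ^ℤ`, at most `k` levels below `ᾱ` at
step `k`. Below `ᾱ` it moves one level back up with conditional probability at least `p`, so for
`ρ = p / q` the potential `ρ^L` of the level `L` (cut off to `0` at and above `ᾱ`) gains in
expectation at most the probability of sitting exactly at `ᾱ` per step before `T`. Hence the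
stopped potential has mean at most `k` at time `k`, and Markov's inequality bounds the probability
of being `l ≥ 1` levels below `ᾱ` at a step `k ≤ T` by `k (q/p)^l`. As `oc` is non-increasing,
`oc (A k)` is at most `oc ᾱ` plus `oc (ᾱ γ^l)` on that event, and summing over `k ≤ n` gives the
bound.
-/

open MeasureTheory ProbabilityTheory

section Grid

variable {γ ᾱ ρ : ℝ}

lemma strictAnti_mul_zpow (hγ0 : 0 < γ) (hγ1 : γ < 1) (hᾱ : 0 < ᾱ) :
    StrictAnti fun L : ℤ => ᾱ * γ ^ L :=
  fun _ _ h => mul_lt_mul_of_pos_left (zpow_lt_zpow_right_of_lt_one₀ hγ0 hγ1 h) hᾱ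

lemma mul_zpow_le_iff (hγ0 : 0 < γ) (hγ1 : γ < 1) (hᾱ : 0 < ᾱ) {L : ℤ} :
    ᾱ * γ ^ L ≤ ᾱ ↔ 0 ≤ L := by
  simpa using (strictAnti_mul_zpow hγ0 hγ1 hᾱ).le_iff_ge (a := L) (b := 0)

lemma mul_zpow_lt_iff (hγ0 : 0 < γ) (hγ1 : γ < 1) (hᾱ : 0 < ᾱ) {L : ℤ} :
    ᾱ * γ ^ L < ᾱ ↔ 0 < L := by
  simpa using (strictAnti_mul_zpow hγ0 hγ1 hᾱ).lt_iff_gt (a := L) (b := 0)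

lemma le_mul_zpow_iff (hγ0 : 0 < γ) (hγ1 : γ < 1) (hᾱ : 0 < ᾱ) {L : ℤ} :
    ᾱ ≤ ᾱ * γ ^ L ↔ L ≤ 0 := by
  simpa using (strictAnti_mul_zpow hγ0 hγ1 hᾱ).le_iff_ge (a := 0) (b := L)

lemma mul_mul_zpow (hγ0 : 0 < γ) (L : ℤ) : γ * (ᾱ * γ ^ L) = ᾱ * γ ^ (L + 1) := by
  rw [zpow_add_one₀ hγ0.ne']; ring

lemma inv_mul_mul_zpow (hγ0 : 0 < γ) (L : ℤ) : γ⁻¹ * (ᾱ * γ ^ L) = ᾱ * γ ^ (L - 1) := by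
  rw [zpow_sub_one₀ hγ0.ne']; ring

lemma exists_level_le (hγ0 : 0 < γ) (hγ1 : γ < 1) (hᾱ : 0 < ᾱ) {j j' : ℤ} (hj : j ≤ 0)
    (hj' : j' ≤ 0) {B : ℕ → ℝ} (hB0 : B 0 = ᾱ * γ ^ j)
    (hB : ∀ k, B (k + 1) = γ * B k ∨ B (k + 1) = min (ᾱ * γ ^ j') (γ⁻¹ * B k)) :
    ∀ k : ℕ, ∃ L : ℤ, L ≤ k ∧ B k = ᾱ * γ ^ L := by
  intro k
  induction k with
  | zero => exact ⟨j, by simpa using hj, hB0⟩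
  | succ k ih =>
    obtain ⟨L, hLk, hBk⟩ := ih
    rcases hB k with hshrink | hgrow
    · exact ⟨L + 1, by push_cast; omega, by rw [hshrink, hBk, mul_mul_zpow hγ0]⟩
    · refine ⟨max j' (L - 1), by push_cast; omega, ?_⟩
      rw [hgrow, hBk, inv_mul_mul_zpow hγ0, (strictAnti_mul_zpow hγ0 hγ1 hᾱ).antitone.map_max]

noncomputable def gridWeight (γ ᾱ ρ a : ℝ) : ℝ :=
  if a < ᾱ then ρ ^ Real.logb γ (a / ᾱ) else 0

lemma measurable_gridWeight : Measurable (gridWeight γ ᾱ ρ) := by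
  unfold gridWeight
  refine Measurable.ite (measurableSet_lt measurable_id measurable_const) ?_ measurable_const
  simp only [Real.logb]
  fun_prop

lemma gridWeight_nonneg (hρ : 0 ≤ ρ) (a : ℝ) : 0 ≤ gridWeight γ ᾱ ρ a := by
  unfold gridWeight
  split_ifs
  exacts [Real.rpow_nonneg hρ _, le_rfl]

lemma gridWeight_eq_zero_of_le {a : ℝ} (h : ᾱ ≤ a) : gridWeight γ ᾱ ρ a = 0 :=
  if_neg h.not_gt

lemma gridWeight_min_of_le {c : ℝ} (hc : ᾱ ≤ c) (a : ℝ) :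
    gridWeight γ ᾱ ρ (min c a) = gridWeight γ ᾱ ρ a := by
  rcases lt_or_ge a ᾱ with ha | ha
  · rw [min_eq_right (ha.le.trans hc)]
  · rw [gridWeight_eq_zero_of_le ha, gridWeight_eq_zero_of_le (le_min hc ha)]

lemma gridWeight_mul_zpow (hγ0 : 0 < γ) (hγ1 : γ < 1) (hᾱ : 0 < ᾱ) (L : ℤ) :
    gridWeight γ ᾱ ρ (ᾱ * γ ^ L) = if 0 < L then ρ ^ L else 0 := by
  simp_rw [gridWeight, mul_zpow_lt_iff hγ0 hγ1 hᾱ, mul_div_cancel_left₀ _ hᾱ.ne',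
    ← Real.rpow_intCast, Real.logb_rpow hγ0 hγ1.ne]

lemma gridWeight_mul_zpow_le (hγ0 : 0 < γ) (hγ1 : γ < 1) (hᾱ : 0 < ᾱ) (hρ : 1 ≤ ρ)
    {L j : ℤ} (hL : L ≤ j) : gridWeight γ ᾱ ρ (ᾱ * γ ^ L) ≤ ρ ^ j := by
  rw [gridWeight_mul_zpow hγ0 hγ1 hᾱ]
  split_ifs
  exacts [zpow_le_zpow_right₀ hρ hL, by positivity]

end Grid

section CondExp

variable {Ω : Type*} {m mΩ : MeasurableSpace Ω} {μ : Measure[mΩ] Ω} [IsFiniteMeasure μ]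
  {D G : Set Ω} {p : ℝ}

lemma mul_measureReal_le_measureReal_inter_of_le_condExp (hm : m ≤ mΩ) (hD : MeasurableSet[m] D)
    (hG : MeasurableSet G) (hp : ∀ᵐ x ∂μ, x ∈ D → p ≤ μ[G.indicator (fun _ => (1 : ℝ)) | m] x) :
    p * μ.real D ≤ μ.real (D ∩ G) := by
  have hint : Integrable (G.indicator fun _ => (1 : ℝ)) μ := (integrable_const 1).indicator hG
  calc p * μ.real D = ∫ _ in D, p ∂μ := by rw [setIntegral_const, smul_eq_mul, mul_comm]
    _ ≤ ∫ x in D, μ[G.indicator (fun _ => (1 : ℝ)) | m] x ∂μ :=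
      setIntegral_mono_ae_restrict (integrableOn_const) integrable_condExp.integrableOn
        ((ae_restrict_iff' (hm D hD)).2 hp)
    _ = ∫ x in D, G.indicator (fun _ => (1 : ℝ)) x ∂μ := setIntegral_condExp hm hint hD
    _ = μ.real (D ∩ G) := by rw [setIntegral_indicator hG, setIntegral_const, smul_eq_mul, mul_one]

lemma setIntegral_le_of_le_condExp (hm : m ≤ mΩ) (hD : MeasurableSet[m] D)
    (hG : MeasurableSet G) (hp : ∀ᵐ x ∂μ, x ∈ D → p ≤ μ[G.indicator (fun _ => (1 : ℝ)) | m] x)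
    {f : Ω → ℝ} (hf : IntegrableOn f D μ) {a b : ℝ} (hba : b ≤ a)
    (hfG : ∀ᵐ x ∂μ, x ∈ D → x ∈ G → f x ≤ b) (hfGc : ∀ᵐ x ∂μ, x ∈ D → x ∉ G → f x ≤ a) :
    ∫ x in D, f x ∂μ ≤ (a - (a - b) * p) * μ.real D := by
  have hDG := mul_measureReal_le_measureReal_inter_of_le_condExp hm hD hG hp
  have hind : IntegrableOn (fun x => (a - b) * G.indicator (fun _ => (1 : ℝ)) x) D μ :=
    (((integrable_const (1 : ℝ)).indicator hG).const_mul _).integrableOn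
  calc ∫ x in D, f x ∂μ ≤ ∫ x in D, (a - (a - b) * G.indicator (fun _ => (1 : ℝ)) x) ∂μ := by
        refine setIntegral_mono_ae_restrict hf ((integrable_const a).integrableOn.sub hind) ?_
        rw [Filter.EventuallyLE, ae_restrict_iff' (hm D hD)]
        filter_upwards [hfG, hfGc] with x hxG hxGc hxD
        by_cases hx : x ∈ G
        · simpa [hx] using hxG hxD hx
        · simpa [hx] using hxGc hxD hx
    _ = a * μ.real D - (a - b) * μ.real (D ∩ G) := by
        rw [integral_sub (integrable_const a).integrableOn hind, integral_const_mul,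
          setIntegral_indicator hG,
          setIntegral_const, setIntegral_const, smul_eq_mul, smul_eq_mul, mul_one, mul_comm]
    _ ≤ (a - (a - b) * p) * μ.real D := by
        nlinarith [mul_le_mul_of_nonneg_left hDG (sub_nonneg.2 hba)]

end CondExp

lemma stoppedProcess_natCast_succ {Ω β : Type*} [AddCommGroup β] (u : ℕ → Ω → β) (T : Ω → ℕ)
    (k : ℕ) :
    stoppedProcess u (fun x => (T x : WithTop ℕ)) (k + 1) =
      stoppedProcess u (fun x => (T x : WithTop ℕ)) k +
        {x | k < T x}.indicator (u (k + 1) - u k) := by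
  ext x
  rw [Pi.add_apply]
  by_cases h : k < T x
  · rw [stoppedProcess_eq_of_le (τ := fun x => (T x : WithTop ℕ)) (WithTop.coe_le_coe.2 h),
      stoppedProcess_eq_of_le (τ := fun x => (T x : WithTop ℕ)) (WithTop.coe_le_coe.2 h.le),
      Set.indicator_of_mem (show x ∈ {x | k < T x} from h), Pi.sub_apply, add_sub_cancel]
  · rw [not_lt] at h
    rw [stoppedProcess_eq_of_ge (τ := fun x => (T x : WithTop ℕ))
        (WithTop.coe_le_coe.2 (h.trans k.le_succ)),
      stoppedProcess_eq_of_ge (τ := fun x => (T x : WithTop ℕ)) (WithTop.coe_le_coe.2 h),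
      Set.indicator_of_notMem (show x ∉ {x | k < T x} from h.not_gt), add_zero]

section Levels

variable {Ω : Type*} {γ ᾱ : ℝ} {P : Ω → Prop} {X : Ω → ℝ} {x : Ω}

lemma indicator_eq_sum_indicator_level (hγ0 : 0 < γ) (hγ1 : γ < 1) (hᾱ : 0 < ᾱ) {g : Ω → ℝ}
    {k : ℕ} (hx : ∃ L : ℤ, L ≤ k ∧ X x = ᾱ * γ ^ L)
    (hg : ∀ L : ℤ, L < 0 → X x = ᾱ * γ ^ L → g x = 0) :
    {y | P y}.indicator g x =
      ∑ L ∈ Finset.Icc 0 (k : ℤ), {y | P y ∧ X y = ᾱ * γ ^ L}.indicator g x := by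
  obtain ⟨L₀, hL₀k, hxL₀⟩ := hx
  by_cases hPx : P x
  swap
  · simp [Set.indicator, hPx]
  rw [Set.indicator_of_mem (show x ∈ {y | P y} from hPx)]
  rcases lt_or_ge L₀ 0 with hneg | hnonneg
  · rw [hg L₀ hneg hxL₀]
    exact (Finset.sum_eq_zero fun L _ => by simp [Set.indicator, hg L₀ hneg hxL₀]).symm
  · rw [Finset.sum_eq_single_of_mem L₀ (Finset.mem_Icc.2 ⟨hnonneg, hL₀k⟩)]
    · exact (Set.indicator_of_mem (show x ∈ {y | P y ∧ X y = ᾱ * γ ^ L₀} from ⟨hPx, hxL₀⟩) g).symm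
    · intro L _ hL
      refine Set.indicator_of_notMem (fun hxL => hL ?_) g
      exact (strictAnti_mul_zpow hγ0 hγ1 hᾱ).injective (hxL.2.symm.trans hxL₀)

lemma le_add_sum_indicator_level (hγ0 : 0 < γ) (hγ1 : γ < 1) (hᾱ : 0 < ᾱ) {oc : ℝ → ℝ}
    (hoc0 : ∀ a, 0 < a → 0 ≤ oc a) (hocmono : ∀ a b, 0 < a → a ≤ b → oc b ≤ oc a) {n : ℕ}
    (hPx : P x) (hx : ∃ L : ℤ, L ≤ n ∧ X x = ᾱ * γ ^ L) :
    oc (X x) ≤ oc ᾱ + ∑ l ∈ Finset.Icc 1 n,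
      {y | P y ∧ X y = ᾱ * γ ^ l}.indicator (fun _ => oc (ᾱ * γ ^ l)) x := by
  obtain ⟨L, hLn, hxL⟩ := hx
  have hsum_nonneg : 0 ≤ ∑ l ∈ Finset.Icc 1 n,
      {y | P y ∧ X y = ᾱ * γ ^ l}.indicator (fun _ => oc (ᾱ * γ ^ l)) x :=
    Finset.sum_nonneg fun l _ => Set.indicator_nonneg (fun _ _ => hoc0 _ (by positivity)) x
  rcases le_or_gt L 0 with hL | hL
  · have := hocmono ᾱ (X x) hᾱ (hxL ▸ (le_mul_zpow_iff hγ0 hγ1 hᾱ).2 hL)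
    linarith
  · lift L to ℕ using hL.le
    have hmem : L ∈ Finset.Icc 1 n := Finset.mem_Icc.2 ⟨by omega, by omega⟩
    have hxL' : X x = ᾱ * γ ^ L := by rw [hxL, zpow_natCast]
    have := Finset.single_le_sum (fun l _ => Set.indicator_nonneg
      (fun _ _ => hoc0 _ (by positivity)) x) hmem (f := fun l =>
        {y | P y ∧ X y = ᾱ * γ ^ l}.indicator (fun _ => oc (ᾱ * γ ^ l)) x)
    rw [Set.indicator_of_mem (show x ∈ {y | P y ∧ X y = ᾱ * γ ^ L} from ⟨hPx, hxL'⟩)] at this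
    rw [hxL']
    linarith [hoc0 ᾱ hᾱ]

end Levels

section StepSizeProcess

variable {Ω : Type*} [mΩ : MeasurableSpace Ω] {μ : Measure Ω} [IsProbabilityMeasure μ]
  {F : Filtration ℕ mΩ} {γ ᾱ ρ p αmax : ℝ} {A : ℕ → Ω → ℝ} {T : Ω → ℕ}

lemma integrable_gridWeight_comp (hγ0 : 0 < γ) (hγ1 : γ < 1) (hᾱ : 0 < ᾱ) (hρ : 1 ≤ ρ)
    {X : Ω → ℝ} (hX : Measurable X) {j : ℕ}
    (hlev : ∀ᵐ x ∂μ, ∃ L : ℤ, L ≤ j ∧ X x = ᾱ * γ ^ L) :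
    Integrable (fun x => gridWeight γ ᾱ ρ (X x)) μ := by
  refine Integrable.of_bound (measurable_gridWeight.comp hX).aestronglyMeasurable (ρ ^ (j : ℤ)) ?_
  filter_upwards [hlev] with x ⟨L, hLj, hxL⟩
  rw [Real.norm_of_nonneg (gridWeight_nonneg (by linarith) _), hxL]
  exact gridWeight_mul_zpow_le hγ0 hγ1 hᾱ hρ hLj

lemma measurableSet_lt_and_eq (hadp : Adapted F A)
    (hT : IsStoppingTime F fun x => (T x : WithTop ℕ)) (k : ℕ) (a : ℝ) :
    MeasurableSet[F k] {x | k < T x ∧ A k x = a} :=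
  (show MeasurableSet[F k] {x | k < T x} by simpa using hT.measurableSet_gt k).inter
    (measurableSet_eq_fun (hadp k) measurable_const)

lemma measurableSet_le_and_eq (hadp : Adapted F A)
    (hT : IsStoppingTime F fun x => (T x : WithTop ℕ)) (k : ℕ) (a : ℝ) :
    MeasurableSet[F k] {x | k ≤ T x ∧ A k x = a} :=
  (show MeasurableSet[F k] {x | k ≤ T x} by simpa using hT.measurableSet_ge k).inter
    (measurableSet_eq_fun (hadp k) measurable_const)

lemma setIntegral_gridWeight_succ_le (hγ0 : 0 < γ) (hγ1 : γ < 1) (hᾱ : 0 < ᾱ)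
    (hαmax : ᾱ ≤ αmax) (hρ : 1 ≤ ρ) (hρp : ρ * (1 - p) = p) (hadp : Adapted F A)
    (hT : IsStoppingTime F fun x => (T x : WithTop ℕ)) {k : ℕ}
    (hint : Integrable (fun x => gridWeight γ ᾱ ρ (A (k + 1) x)) μ)
    (hstep : ∀ᵐ x ∂μ, A (k + 1) x = γ * A k x ∨ A (k + 1) x = min αmax (γ⁻¹ * A k x))
    (hcond : ∀ᵐ x ∂μ, (k < T x ∧ A k x ≤ ᾱ) →
      p ≤ (μ[Set.indicator {x' | A (k + 1) x' = min αmax (γ⁻¹ * A k x')}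
        (fun _ => (1 : ℝ)) | F k]) x)
    {L : ℤ} (hL : 0 ≤ L) :
    ∫ x in {x | k < T x ∧ A k x = ᾱ * γ ^ L}, gridWeight γ ᾱ ρ (A (k + 1) x) ∂μ ≤
      ρ ^ L * μ.real {x | k < T x ∧ A k x = ᾱ * γ ^ L} := by
  have hρ0 : ρ ≠ 0 := (zero_lt_one.trans_le hρ).ne'
  have hρinv : ρ⁻¹ * p = 1 - p := by field_simp; linarith
  have hbalance : ρ ^ (L + 1) - (ρ ^ (L + 1) - ρ ^ (L - 1)) * p = ρ ^ L := by
    rw [zpow_add_one₀ hρ0, zpow_sub_one₀ hρ0]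
    linear_combination ρ ^ L * hρp + ρ ^ L * hρinv
  have hAm : ∀ i, Measurable (A i) := fun i => (hadp i).mono (F.le i) le_rfl
  rw [← hbalance]
  refine setIntegral_le_of_le_condExp (F.le k) (measurableSet_lt_and_eq hadp hT k _)
    (measurableSet_eq_fun (hAm (k + 1))
      ((measurable_const (a := αmax)).min ((hAm k).const_mul γ⁻¹))) ?_
    hint.integrableOn (zpow_le_zpow_right₀ hρ (by omega)) ?_ ?_
  · filter_upwards [hcond] with x hx hxD
    exact hx ⟨hxD.1, hxD.2 ▸ (mul_zpow_le_iff hγ0 hγ1 hᾱ).2 hL⟩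
  · filter_upwards with x hxD hxG
    rw [show A (k + 1) x = _ from hxG, gridWeight_min_of_le hαmax, hxD.2, inv_mul_mul_zpow hγ0]
    exact gridWeight_mul_zpow_le hγ0 hγ1 hᾱ hρ le_rfl
  · filter_upwards [hstep] with x hx hxD hxG
    rw [hx.resolve_right hxG, hxD.2, mul_mul_zpow hγ0]
    exact gridWeight_mul_zpow_le hγ0 hγ1 hᾱ hρ le_rfl

lemma setIntegral_gridWeight_succ_sub_le (hγ0 : 0 < γ) (hγ1 : γ < 1) (hᾱ : 0 < ᾱ)
    (hαmax : ᾱ ≤ αmax) (hρ : 1 ≤ ρ) (hρp : ρ * (1 - p) = p) (hadp : Adapted F A)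
    (hT : IsStoppingTime F fun x => (T x : WithTop ℕ)) {k : ℕ}
    (hint : Integrable (fun x => gridWeight γ ᾱ ρ (A k x)) μ)
    (hint' : Integrable (fun x => gridWeight γ ᾱ ρ (A (k + 1) x)) μ)
    (hstep : ∀ᵐ x ∂μ, A (k + 1) x = γ * A k x ∨ A (k + 1) x = min αmax (γ⁻¹ * A k x))
    (hcond : ∀ᵐ x ∂μ, (k < T x ∧ A k x ≤ ᾱ) →
      p ≤ (μ[Set.indicator {x' | A (k + 1) x' = min αmax (γ⁻¹ * A k x')}
        (fun _ => (1 : ℝ)) | F k]) x)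
    {L : ℤ} (hL : 0 ≤ L) :
    ∫ x in {x | k < T x ∧ A k x = ᾱ * γ ^ L},
        (gridWeight γ ᾱ ρ (A (k + 1) x) - gridWeight γ ᾱ ρ (A k x)) ∂μ ≤
      if L = 0 then 1 else 0 := by
  have hD := F.le k _ (measurableSet_lt_and_eq hadp hT k (ᾱ * γ ^ L))
  have hsucc := setIntegral_gridWeight_succ_le hγ0 hγ1 hᾱ hαmax hρ hρp hadp hT hint' hstep hcond hL
  rw [integral_sub hint'.integrableOn hint.integrableOn,
    setIntegral_congr_fun hD fun x hx => congrArg (gridWeight γ ᾱ ρ) hx.2, setIntegral_const,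
    smul_eq_mul, gridWeight_mul_zpow hγ0 hγ1 hᾱ]
  rcases hL.eq_or_lt with rfl | hpos
  · simp only [zpow_zero, one_mul] at hsucc
    simp only [lt_irrefl, if_false, mul_zero, sub_zero, if_true]
    exact hsucc.trans measureReal_le_one
  · simp only [hpos, hpos.ne', if_true, if_false]
    linarith

lemma integral_stoppedProcess_gridWeight_succ_le (hγ0 : 0 < γ) (hγ1 : γ < 1) (hᾱ : 0 < ᾱ)
    (hαmax : ᾱ ≤ αmax) (hρ : 1 ≤ ρ) (hρp : ρ * (1 - p) = p) (hadp : Adapted F A)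
    (hT : IsStoppingTime F fun x => (T x : WithTop ℕ))
    (hlev : ∀ᵐ x ∂μ, ∀ i : ℕ, ∃ L : ℤ, L ≤ i ∧ A i x = ᾱ * γ ^ L) {k : ℕ}
    (hstep : ∀ᵐ x ∂μ, A (k + 1) x = γ * A k x ∨ A (k + 1) x = min αmax (γ⁻¹ * A k x))
    (hcond : ∀ᵐ x ∂μ, (k < T x ∧ A k x ≤ ᾱ) →
      p ≤ (μ[Set.indicator {x' | A (k + 1) x' = min αmax (γ⁻¹ * A k x')}
        (fun _ => (1 : ℝ)) | F k]) x) :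
    ∫ x, stoppedProcess (fun i x => gridWeight γ ᾱ ρ (A i x)) (fun x => (T x : WithTop ℕ))
        (k + 1) x ∂μ ≤
      ∫ x, stoppedProcess (fun i x => gridWeight γ ᾱ ρ (A i x)) (fun x => (T x : WithTop ℕ))
        k x ∂μ + 1 := by
  set f : ℕ → Ω → ℝ := fun i x => gridWeight γ ᾱ ρ (A i x)
  set D : ℤ → Set Ω := fun L => {x | k < T x ∧ A k x = ᾱ * γ ^ L}
  have hf : ∀ i, Integrable (f i) μ := fun i => integrable_gridWeight_comp hγ0 hγ1 hᾱ hρ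
    ((hadp i).mono (F.le i) le_rfl) (hlev.mono fun x hx => hx i)
  have hD : ∀ L, MeasurableSet (D L) := fun L => F.le k _ (measurableSet_lt_and_eq hadp hT k _)
  have hweight_zero : ∀ L : ℤ, L ≤ 0 → gridWeight γ ᾱ ρ (ᾱ * γ ^ L) = 0 := fun L hL =>
    gridWeight_eq_zero_of_le ((le_mul_zpow_iff hγ0 hγ1 hᾱ).2 hL)
  -- above `ᾱ` the weight vanishes before and after the step, so only levels `0, …, k` contribute
  have hlevel_sum : {x | k < T x}.indicator (f (k + 1) - f k) =ᵐ[μ]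
      fun x => ∑ L ∈ Finset.Icc 0 (k : ℤ), (D L).indicator (f (k + 1) - f k) x := by
    filter_upwards [hlev, hstep] with x hx hxk
    refine indicator_eq_sum_indicator_level hγ0 hγ1 hᾱ (hx k) fun L hL hxL => ?_
    show gridWeight γ ᾱ ρ (A (k + 1) x) - gridWeight γ ᾱ ρ (A k x) = 0
    rcases hxk with h | h <;> rw [h, hxL]
    · rw [mul_mul_zpow hγ0, hweight_zero _ (by omega), hweight_zero _ hL.le, sub_zero]
    · rw [gridWeight_min_of_le hαmax, inv_mul_mul_zpow hγ0, hweight_zero _ (by omega),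
        hweight_zero _ hL.le, sub_zero]
  have hK : MeasurableSet {x | k < T x} :=
    F.le k _ (by simpa using hT.measurableSet_gt k)
  rw [stoppedProcess_natCast_succ, Pi.add_def, integral_add (integrable_stoppedProcess hT hf k)
    (((hf _).sub (hf _)).indicator hK), integral_congr_ae hlevel_sum,
    integral_finsetSum _ fun L _ => ((hf _).sub (hf _)).indicator (hD L)]
  simp_rw [integral_indicator (hD _)]
  gcongr
  calc ∑ L ∈ Finset.Icc 0 (k : ℤ), ∫ x in D L, (f (k + 1) - f k) x ∂μ
      ≤ ∑ L ∈ Finset.Icc 0 (k : ℤ), if L = 0 then (1 : ℝ) else 0 := Finset.sum_le_sum fun L hL =>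
        setIntegral_gridWeight_succ_sub_le hγ0 hγ1 hᾱ hαmax hρ hρp hadp hT (hf k) (hf (k + 1))
          hstep hcond (Finset.mem_Icc.1 hL).1
    _ = 1 := by simp

lemma integral_stoppedProcess_gridWeight_le (hγ0 : 0 < γ) (hγ1 : γ < 1) (hᾱ : 0 < ᾱ)
    (hαmax : ᾱ ≤ αmax) (hρ : 1 ≤ ρ) (hρp : ρ * (1 - p) = p) (hadp : Adapted F A)
    (hT : IsStoppingTime F fun x => (T x : WithTop ℕ))
    (hlev : ∀ᵐ x ∂μ, ∀ i : ℕ, ∃ L : ℤ, L ≤ i ∧ A i x = ᾱ * γ ^ L)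
    (hstep : ∀ k, ∀ᵐ x ∂μ, A (k + 1) x = γ * A k x ∨ A (k + 1) x = min αmax (γ⁻¹ * A k x))
    (hcond : ∀ k, ∀ᵐ x ∂μ, (k < T x ∧ A k x ≤ ᾱ) →
      p ≤ (μ[Set.indicator {x' | A (k + 1) x' = min αmax (γ⁻¹ * A k x')}
        (fun _ => (1 : ℝ)) | F k]) x) (k : ℕ) :
    ∫ x, stoppedProcess (fun i x => gridWeight γ ᾱ ρ (A i x)) (fun x => (T x : WithTop ℕ))
        k x ∂μ ≤ k := by
  induction k with
  | zero =>
    have h0 : ∀ᵐ x ∂μ, stoppedProcess (fun i x => gridWeight γ ᾱ ρ (A i x))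
        (fun x => (T x : WithTop ℕ)) 0 x = 0 := by
      filter_upwards [hlev] with x hx
      obtain ⟨L, hL, hxL⟩ := hx 0
      rw [stoppedProcess_eq_of_le (τ := fun x => (T x : WithTop ℕ))
          (WithTop.coe_le_coe.2 (T x).zero_le),
        hxL, gridWeight_eq_zero_of_le ((le_mul_zpow_iff hγ0 hγ1 hᾱ).2 (by simpa using hL))]
    rw [integral_congr_ae h0]
    simp
  | succ k ih =>
    have := integral_stoppedProcess_gridWeight_succ_le hγ0 hγ1 hᾱ hαmax hρ hρp hadp hT hlev
      (hstep k) (hcond k)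
    push_cast
    linarith

lemma measureReal_level_le (hγ0 : 0 < γ) (hγ1 : γ < 1) (hᾱ : 0 < ᾱ)
    (hαmax : ᾱ ≤ αmax) (hρ : 1 ≤ ρ) (hρp : ρ * (1 - p) = p) (hadp : Adapted F A)
    (hT : IsStoppingTime F fun x => (T x : WithTop ℕ))
    (hlev : ∀ᵐ x ∂μ, ∀ i : ℕ, ∃ L : ℤ, L ≤ i ∧ A i x = ᾱ * γ ^ L)
    (hstep : ∀ k, ∀ᵐ x ∂μ, A (k + 1) x = γ * A k x ∨ A (k + 1) x = min αmax (γ⁻¹ * A k x))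
    (hcond : ∀ k, ∀ᵐ x ∂μ, (k < T x ∧ A k x ≤ ᾱ) →
      p ≤ (μ[Set.indicator {x' | A (k + 1) x' = min αmax (γ⁻¹ * A k x')}
        (fun _ => (1 : ℝ)) | F k]) x) (k : ℕ) {l : ℕ} (hl : 1 ≤ l) :
    μ.real {x | k ≤ T x ∧ A k x = ᾱ * γ ^ l} ≤ k * ρ⁻¹ ^ l := by
  set U := stoppedProcess (fun i x => gridWeight γ ᾱ ρ (A i x)) (fun x => (T x : WithTop ℕ))
  have hU : Integrable (U k) μ := integrable_stoppedProcess hT (fun i =>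
    integrable_gridWeight_comp hγ0 hγ1 hᾱ hρ ((hadp i).mono (F.le i) le_rfl)
      (hlev.mono fun x hx => hx i)) k
  have hsub : {x | k ≤ T x ∧ A k x = ᾱ * γ ^ l} ⊆ {x | ρ ^ l ≤ U k x} := by
    intro x hx
    change ρ ^ l ≤ stoppedProcess _ _ k x
    rw [stoppedProcess_eq_of_le (τ := fun x => (T x : WithTop ℕ))
      (WithTop.coe_le_coe.2 hx.1), hx.2, ← zpow_natCast γ, gridWeight_mul_zpow hγ0 hγ1 hᾱ,
      if_pos (by omega), zpow_natCast]
  have hmarkov := mul_meas_ge_le_integral_of_nonneg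
    (ae_of_all _ fun x => gridWeight_nonneg (by linarith) _) hU (ρ ^ l)
  have hUk := integral_stoppedProcess_gridWeight_le hγ0 hγ1 hᾱ hαmax hρ hρp hadp hT hlev hstep
    hcond k
  rw [inv_pow, ← div_eq_mul_inv, le_div_iff₀' (by positivity)]
  calc ρ ^ l * μ.real {x | k ≤ T x ∧ A k x = ᾱ * γ ^ l} ≤ ρ ^ l * μ.real {x | ρ ^ l ≤ U k x} :=
        mul_le_mul_of_nonneg_left (measureReal_mono hsub) (by positivity)
    _ ≤ k := hmarkov.trans hUk

lemma integral_sum_le_sum_measureReal_level (hγ0 : 0 < γ) (hγ1 : γ < 1) (hᾱ : 0 < ᾱ)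
    (hadp : Adapted F A) (hpos : ∀ k x, 0 < A k x)
    (hT : IsStoppingTime F fun x => (T x : WithTop ℕ))
    (hlev : ∀ᵐ x ∂μ, ∀ i : ℕ, ∃ L : ℤ, L ≤ i ∧ A i x = ᾱ * γ ^ L) {oc : ℝ → ℝ}
    (hoc0 : ∀ a, 0 < a → 0 ≤ oc a) (hocmono : ∀ a b, 0 < a → a ≤ b → oc b ≤ oc a) (n : ℕ) :
    ∫ x, (∑ k ∈ Finset.Icc 1 (min (T x) n), oc (A k x)) ∂μ ≤
      n * oc ᾱ + ∑ k ∈ Finset.Icc 1 n, ∑ l ∈ Finset.Icc 1 n,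
        μ.real {x | k ≤ T x ∧ A k x = ᾱ * γ ^ l} * oc (ᾱ * γ ^ l) := by
  set E : ℕ → ℕ → Set Ω := fun k l => {x | k ≤ T x ∧ A k x = ᾱ * γ ^ l}
  set g : ℕ → Ω → ℝ := fun k x =>
    oc ᾱ + ∑ l ∈ Finset.Icc 1 n, (E k l).indicator (fun _ => oc (ᾱ * γ ^ l)) x
  have hE : ∀ k l, MeasurableSet (E k l) := fun k l =>
    F.le k _ (measurableSet_le_and_eq hadp hT k _)
  have hg : ∀ k, Integrable (g k) μ := fun k => (integrable_const _).add
    (integrable_finsetSum _ fun l _ => (integrable_const _).indicator (hE k l))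
  have hg_nonneg : ∀ k x, 0 ≤ g k x := fun k x => add_nonneg (hoc0 ᾱ hᾱ)
    (Finset.sum_nonneg fun l _ => Set.indicator_nonneg (fun _ _ => hoc0 _ (by positivity)) x)
  have hle : ∀ᵐ x ∂μ, ∑ k ∈ Finset.Icc 1 (min (T x) n), oc (A k x) ≤
      ∑ k ∈ Finset.Icc 1 n, g k x := by
    filter_upwards [hlev] with x hx
    calc ∑ k ∈ Finset.Icc 1 (min (T x) n), oc (A k x)
        ≤ ∑ k ∈ Finset.Icc 1 (min (T x) n), g k x := by
          refine Finset.sum_le_sum fun k hk => ?_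
          have hk' := (Finset.mem_Icc.1 hk).2
          obtain ⟨L, hLk, hxL⟩ := hx k
          exact le_add_sum_indicator_level hγ0 hγ1 hᾱ hoc0 hocmono (P := fun y => k ≤ T y)
            (X := A k) (le_min_iff.1 hk').1 ⟨L, by omega, hxL⟩
      _ ≤ ∑ k ∈ Finset.Icc 1 n, g k x :=
          Finset.sum_le_sum_of_subset_of_nonneg (Finset.Icc_subset_Icc_right (min_le_right _ _))
            fun k _ _ => hg_nonneg k x
  refine (integral_mono_of_nonneg (ae_of_all _ fun x => Finset.sum_nonneg fun k _ =>
    hoc0 _ (hpos k x)) (integrable_finsetSum _ fun k _ => hg k) hle).trans_eq ?_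
  have hg_integral : ∀ k, ∫ x, g k x ∂μ =
      oc ᾱ + ∑ l ∈ Finset.Icc 1 n, μ.real (E k l) * oc (ᾱ * γ ^ l) := fun k => by
    rw [integral_add (integrable_const _) (integrable_finsetSum _ fun l _ =>
      (integrable_const _).indicator (hE k l)), integral_finsetSum _ fun l _ =>
      (integrable_const _).indicator (hE k l)]
    simp [integral_indicator_const _ (hE k _)]
  rw [integral_finsetSum _ fun k _ => hg k, Finset.sum_congr rfl fun k _ => hg_integral k,
    Finset.sum_add_distrib]
  simp [E]

end StepSizeProcess

theorem stmt_9_general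
    {Ω : Type*} [mΩ : MeasurableSpace Ω] (μ : Measure Ω) [IsProbabilityMeasure μ]
    (F : Filtration ℕ mΩ)
    (γ ᾱ p q : ℝ) (hγ0 : 0 < γ) (hγ1 : γ < 1) (hᾱ : 0 < ᾱ)
    (hp : 1/2 < p) (hp1 : p < 1) (hq : q = 1 - p)
    (αmax : ℝ) (j' : ℤ) (hj' : j' ≤ 0) (hαmax : αmax = ᾱ * γ ^ j')
    (A : ℕ → Ω → ℝ) (hadp : Adapted F A) (hpos : ∀ k x, 0 < A k x)
    (T : Ω → ℕ) (hT : IsStoppingTime F (fun ω => (T ω : WithTop ℕ)))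
    (j : ℤ) (hj : j ≤ 0) (hA0 : ∀ x, A 0 x = ᾱ * γ ^ j)
    (hstep : ∀ k, ∀ᵐ x ∂μ,
      A (k+1) x = γ * A k x ∨ A (k+1) x = min αmax (γ⁻¹ * A k x))
    (hcond : ∀ k, ∀ᵐ x ∂μ, (k < T x ∧ A k x ≤ ᾱ) →
      p ≤ (μ[Set.indicator {x' | A (k+1) x' = min αmax (γ⁻¹ * A k x')}
              (fun _ => (1:ℝ)) | F k]) x)
    (oc : ℝ → ℝ) (hoc0 : ∀ a, 0 < a → 0 ≤ oc a)
    (hocmono : ∀ a b, 0 < a → a ≤ b → oc b ≤ oc a)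
    (n : ℕ) :
    ∫ x, (∑ k ∈ Finset.Icc 1 (min (T x) n), oc (A k x)) ∂μ ≤
      (n : ℝ) * ∑ l ∈ Finset.Icc 1 n,
          (min 1 ((n : ℝ) * (q/p)^l
            + (2 * Real.sqrt (p*q) / (1 - 2 * Real.sqrt (p*q))^2) * (2*q)^l)) * oc (ᾱ * γ ^ l)
        + (n : ℝ) * oc ᾱ := by
  have hq0 : 0 < q := by linarith
  have hρ : 1 ≤ p / q := (one_le_div hq0).2 (by linarith)
  have hρp : p / q * (1 - p) = p := by rw [← hq]; field_simp
  have hαmax' : ᾱ ≤ αmax := hαmax ▸ (le_mul_zpow_iff hγ0 hγ1 hᾱ).2 hj'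
  have hlev : ∀ᵐ x ∂μ, ∀ i : ℕ, ∃ L : ℤ, L ≤ i ∧ A i x = ᾱ * γ ^ L := by
    filter_upwards [ae_all_iff.2 hstep] with x hx
    exact exists_level_le hγ0 hγ1 hᾱ hj hj' (hA0 x) (hαmax ▸ hx)
  have hlevel : ∀ k ∈ Finset.Icc 1 n, ∀ l ∈ Finset.Icc 1 n,
      μ.real {x | k ≤ T x ∧ A k x = ᾱ * γ ^ l} ≤ min 1 ((n : ℝ) * (q / p) ^ l
        + (2 * Real.sqrt (p * q) / (1 - 2 * Real.sqrt (p * q)) ^ 2) * (2 * q) ^ l) := by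
    intro k hk l hl
    have hmarkov := measureReal_level_le hγ0 hγ1 hᾱ hαmax' hρ hρp hadp hT hlev hstep hcond k
      (Finset.mem_Icc.1 hl).1
    have hkn : (k : ℝ) ≤ n := by exact_mod_cast (Finset.mem_Icc.1 hk).2
    rw [inv_div] at hmarkov
    refine le_min measureReal_le_one (hmarkov.trans ?_)
    have : 0 ≤ (2 * Real.sqrt (p * q) / (1 - 2 * Real.sqrt (p * q)) ^ 2) * (2 * q) ^ l := by
      positivity
    nlinarith [pow_nonneg (div_pos hq0 (by linarith : 0 < p)).le l]
  calc ∫ x, (∑ k ∈ Finset.Icc 1 (min (T x) n), oc (A k x)) ∂μ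
      ≤ n * oc ᾱ + ∑ k ∈ Finset.Icc 1 n, ∑ l ∈ Finset.Icc 1 n,
          μ.real {x | k ≤ T x ∧ A k x = ᾱ * γ ^ l} * oc (ᾱ * γ ^ l) :=
        integral_sum_le_sum_measureReal_level hγ0 hγ1 hᾱ hadp hpos hT hlev hoc0 hocmono n
    _ ≤ n * oc ᾱ + ∑ k ∈ Finset.Icc 1 n, ∑ l ∈ Finset.Icc 1 n,
          min 1 ((n : ℝ) * (q / p) ^ l + (2 * Real.sqrt (p * q) /
            (1 - 2 * Real.sqrt (p * q)) ^ 2) * (2 * q) ^ l) * oc (ᾱ * γ ^ l) := by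
        gcongr with k hk l hl
        · exact hoc0 _ (by positivity)
        · exact hlevel k hk l hl
    _ = _ := by rw [Finset.sum_const, Nat.card_Icc, nsmul_eq_mul]; push_cast; ring

/-- Expected total oracle complexity bound:
`E[TOC(min{T,n})] ≤ n·Σ_{l=1}^{n} min{1, n·(q/p)^l + c·(2q)^l}·oc(ᾱ·γ^l) + n·oc(ᾱ)`. -/
theorem stmt_9
    {Ω : Type*} [mΩ : MeasurableSpace Ω] (μ : Measure Ω) [IsProbabilityMeasure μ]
    (F : Filtration ℕ mΩ)
    (γ ᾱ p q : ℝ) (hγ0 : 0 < γ) (hγ1 : γ < 1) (hᾱ : 0 < ᾱ)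
    (hp : 1/2 < p) (hp1 : p < 1) (hq : q = 1 - p)
    (αmax : ℝ) (j' : ℤ) (hj' : j' ≤ 0) (hαmax : αmax = ᾱ * γ ^ j')
    (A : ℕ → Ω → ℝ) (hadp : Adapted F A) (hpos : ∀ k x, 0 < A k x)
    (T : Ω → ℕ) (hT : IsStoppingTime F (fun ω => (T ω : WithTop ℕ)))
    (j : ℤ) (hj : j ≤ 0) (hA0 : ∀ x, A 0 x = ᾱ * γ ^ j)
    (hstep : ∀ k, ∀ᵐ x ∂μ,
      A (k+1) x = γ * A k x ∨ A (k+1) x = min αmax (γ⁻¹ * A k x))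
    (hcond : ∀ k, ∀ᵐ x ∂μ, (k < T x ∧ A k x ≤ ᾱ) →
      p ≤ (μ[Set.indicator {x' | A (k+1) x' = min αmax (γ⁻¹ * A k x')}
              (fun _ => (1:ℝ)) | F k]) x)
    (oc : ℝ → ℝ) (hoc0 : ∀ a, 0 < a → 0 ≤ oc a)
    (hocmono : ∀ a b, 0 < a → a ≤ b → oc b ≤ oc a)
    (n : ℕ) (hn : 1 ≤ n) :
    ∫ x, (∑ k ∈ Finset.Icc 1 (min (T x) n), oc (A k x)) ∂μ ≤
      (n : ℝ) * ∑ l ∈ Finset.Icc 1 n,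
          (min 1 ((n : ℝ) * (q/p)^l
            + (2 * Real.sqrt (p*q) / (1 - 2 * Real.sqrt (p*q))^2) * (2*q)^l)) * oc (ᾱ * γ ^ l)
        + (n : ℝ) * oc ᾱ :=
  stmt_9_general (mΩ := mΩ) μ F γ ᾱ p q hγ0 hγ1 hᾱ hp hp1 hq αmax j' hj' hαmax A hadp hpos T hT j hj
    hA0 hstep hcond oc hoc0 hocmono n
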